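/- arXiv:math-ph/0302018 — 5 statements merged into one kernel-verified Lean document; each statement's English description precedes it below -/
import Mathlib

section
/- For every Schwartz function f ∈ 𝒮(ℝ,ℂ), the following limits hold in L²(ℝ,ℂ)-norm as t → 0, t ≠ 0: (T((t,0,0))f − f)/t converges to f′; (T((0,t,0))f − f)/t converges to the function x ↦ −i·x·f(x); and (T((0,0,t))f − f)/t converges to −i·f. -/
open MeasureTheory Complex Filter SchwartzMap

/-- For `g = (ξ₁,ξ₂,ξ₃)`, `T(g)` sends `f : ℝ → ℂ` to
`x ↦ exp(−iξ₃)·exp(−i·x·ξ₂)·f(x+ξ₁)`. -/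
noncomputable def Tfun (g : ℝ × ℝ × ℝ) (f : ℝ → ℂ) : ℝ → ℂ :=
  fun x => Complex.exp (-(Complex.I * g.2.2)) * Complex.exp (-(Complex.I * x * g.2.1)) *
    f (x + g.1)

lemma hasDerivAt_cexp_lin (a s : ℝ) :
    HasDerivAt (fun u : ℝ => Complex.exp (-(Complex.I * a * u)))
      (-(Complex.I * a) * Complex.exp (-(Complex.I * a * s))) s := by
  have h1 : HasDerivAt (fun u : ℝ => -(Complex.I * a) * (u : ℂ)) (-(Complex.I * a)) s := by
    simpa using (Complex.ofRealCLM.hasDerivAt (x := s)).const_mul (-(Complex.I * a))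
  have h2 := h1.cexp
  have he : (fun u : ℝ => Complex.exp (-(Complex.I * a * u)))
      = fun u : ℝ => Complex.exp (-(Complex.I * a) * u) := by
    funext u; ring_nf
  rw [he]
  convert h2 using 1
  ring_nf

lemma norm_cexp_lin_sub_one_le (a s : ℝ) :
    ‖Complex.exp (-(Complex.I * a * s)) - 1‖ ≤ |a| * |s| := by
  have := Convex.norm_image_sub_le_of_norm_hasDerivWithin_le
    (f := fun u : ℝ => Complex.exp (-(Complex.I * a * u)))
    (f' := fun u : ℝ => -(Complex.I * a) * Complex.exp (-(Complex.I * a * u)))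
    (s := (Set.univ : Set ℝ)) (C := |a|)
    (fun u _ => (hasDerivAt_cexp_lin a u).hasDerivWithinAt)
    (fun u _ => ?_) convex_univ (Set.mem_univ (0:ℝ)) (Set.mem_univ s)
  · simpa [Real.norm_eq_abs] using this
  · rw [norm_mul]
    have h1 : ‖Complex.exp (-(Complex.I * a * u))‖ = 1 := by
      rw [Complex.norm_exp]
      simp
    rw [h1, mul_one]
    simp

lemma abs_le_of_mem_uIcc' {s t : ℝ} (hs : s ∈ Set.uIcc 0 t) : |s| ≤ |t| := by
  rw [Set.uIcc_eq_union] at hs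
  rcases hs with h | h <;> rw [Set.mem_Icc] at h <;> rw [abs_le] <;>
    constructor <;> nlinarith [le_abs_self t, neg_abs_le t]

lemma key_quad (a t : ℝ) :
    ‖Complex.exp (-(Complex.I * a * t)) - 1 + Complex.I * a * t‖ ≤ (a ^ 2 * |t|) * |t| := by
  have hg : ∀ s : ℝ, HasDerivAt (fun u : ℝ => Complex.exp (-(Complex.I * a * u)) + Complex.I * a * u)
      (-(Complex.I * a) * Complex.exp (-(Complex.I * a * s)) + Complex.I * a) s := by
    intro s
    have h2 : HasDerivAt (fun u : ℝ => Complex.I * a * (u : ℂ)) (Complex.I * a) s := by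
      simpa using (Complex.ofRealCLM.hasDerivAt (x := s)).const_mul (Complex.I * a)
    exact (hasDerivAt_cexp_lin a s).add h2
  have hmvt := Convex.norm_image_sub_le_of_norm_hasDerivWithin_le
    (f := fun u : ℝ => Complex.exp (-(Complex.I * a * u)) + Complex.I * a * u)
    (f' := fun u : ℝ => -(Complex.I * a) * Complex.exp (-(Complex.I * a * u)) + Complex.I * a)
    (s := Set.uIcc (0:ℝ) t) (C := a ^ 2 * |t|)
    (fun u _ => (hg u).hasDerivWithinAt) (fun u hu => ?_) (convex_uIcc 0 t)
    Set.left_mem_uIcc Set.right_mem_uIcc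
  · have h0 : Complex.exp (-(Complex.I * a * (0:ℝ))) + Complex.I * a * (0:ℝ) = 1 := by simp
    rw [h0] at hmvt
    calc ‖Complex.exp (-(Complex.I * a * t)) - 1 + Complex.I * a * t‖
        = ‖Complex.exp (-(Complex.I * a * t)) + Complex.I * a * t - 1‖ := by ring_nf
      _ ≤ (a ^ 2 * |t|) * ‖t - (0:ℝ)‖ := hmvt
      _ = (a ^ 2 * |t|) * |t| := by rw [sub_zero, Real.norm_eq_abs]
  · show ‖-(Complex.I * a) * Complex.exp (-(Complex.I * a * u)) + Complex.I * a‖ ≤ a ^ 2 * |t|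
    have heq : -(Complex.I * a) * Complex.exp (-(Complex.I * a * u)) + Complex.I * a
        = -(Complex.I * a) * (Complex.exp (-(Complex.I * a * u)) - 1) := by ring
    rw [heq, norm_mul]
    have h1 : ‖-(Complex.I * a)‖ = |a| := by
      simp
    rw [h1]
    have h2 := norm_cexp_lin_sub_one_le a u
    have h3 := abs_le_of_mem_uIcc' hu
    calc |a| * ‖Complex.exp (-(Complex.I * a * u)) - 1‖ ≤ |a| * (|a| * |u|) :=
          mul_le_mul_of_nonneg_left h2 (abs_nonneg a)
      _ ≤ a ^ 2 * |t| := by nlinarith [abs_nonneg u, abs_nonneg t, abs_nonneg a, _root_.sq_abs a]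

lemma schwartz_decay_aux (h : 𝓢(ℝ, ℂ)) (k : ℕ) :
    ∃ D : ℝ, 0 ≤ D ∧ ∀ x : ℝ, ‖h x‖ * (1 + |x|) ^ k ≤ D := by
  refine ⟨2 ^ k * ((Finset.Iic (k, 0)).sup (fun m => SchwartzMap.seminorm ℝ m.1 m.2)) h,
    mul_nonneg (by positivity) (apply_nonneg _ _), fun x => ?_⟩
  have := SchwartzMap.one_add_le_sup_seminorm_apply (𝕜 := ℝ) (m := (k, 0)) (k := k) (n := 0)
    le_rfl le_rfl h x
  simpa [norm_iteratedFDeriv_zero, Real.norm_eq_abs, mul_comm] using this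

lemma memLp_w : MemLp (fun x : ℝ => ((1 + |x|) ^ 2)⁻¹) 2 (volume : Measure ℝ) := by
  have hc : Continuous (fun x : ℝ => ((1 + |x|) ^ 2)⁻¹) := by
    apply Continuous.inv₀ ((continuous_const.add _root_.continuous_abs).pow 2)
    intro x; show (1 + |x|) ^ 2 ≠ 0; positivity
  rw [memLp_two_iff_integrable_sq hc.aestronglyMeasurable]
  apply Integrable.mono integrable_inv_one_add_sq
    ((hc.pow 2).aestronglyMeasurable)
  filter_upwards with x
  simp only [Pi.pow_apply]
  rw [Real.norm_eq_abs, Real.norm_eq_abs, _root_.abs_of_nonneg (by positivity),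
    _root_.abs_of_nonneg (by positivity : (0:ℝ) ≤ ((1 + x ^ 2)⁻¹))]
  rw [inv_pow, ← pow_mul]
  apply inv_anti₀ (by positivity)
  have h1 : 1 + x ^ 2 ≤ (1 + |x|) ^ 2 := by nlinarith [abs_nonneg x, _root_.sq_abs x]
  have h2 : (1 + |x|) ^ 2 ≤ ((1 + |x|) ^ 2) ^ 2 := by nlinarith [abs_nonneg x]
  calc 1 + x ^ 2 ≤ (1 + |x|) ^ 2 := h1
    _ ≤ ((1 + |x|) ^ 2) ^ 2 := h2
    _ = (1 + |x|) ^ (2 * 2) := by rw [← pow_mul]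

lemma squeeze_aux {G : ℝ → ℝ → ℂ} {w : ℝ → ℝ} (hw : MemLp w 2 (volume : Measure ℝ)) (K : ℝ)
    (hbd : ∀ᶠ t in nhdsWithin (0:ℝ) {0}ᶜ, ∀ x, ‖G t x‖ ≤ (K * |t|) * w x) :
    Tendsto (fun t => eLpNorm (G t) 2 (volume : Measure ℝ)) (nhdsWithin 0 {0}ᶜ) (nhds 0) := by
  have hub : ∀ᶠ t in nhdsWithin (0:ℝ) {0}ᶜ,
      eLpNorm (G t) 2 volume ≤ ENNReal.ofReal (_root_.abs (K * |t|)) * eLpNorm w 2 volume := by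
    filter_upwards [hbd] with t ht
    calc eLpNorm (G t) 2 volume ≤ eLpNorm ((K * |t|) • w) 2 volume := by
          apply eLpNorm_mono
          intro x
          refine (ht x).trans ?_
          rw [Pi.smul_apply, smul_eq_mul, Real.norm_eq_abs]
          exact le_abs_self _
      _ = ‖K * |t|‖₊ • eLpNorm w 2 volume := eLpNorm_const_smul _ _ _ _
      _ = ENNReal.ofReal (_root_.abs (K * |t|)) * eLpNorm w 2 volume := by
          rw [ENNReal.smul_def, smul_eq_mul, ← enorm_eq_nnnorm, Real.enorm_eq_ofReal_abs]
  have h1 : Tendsto (fun t : ℝ => ENNReal.ofReal (_root_.abs (K * |t|))) (nhdsWithin 0 {0}ᶜ)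
      (nhds 0) := by
    have h2 : Tendsto (fun t : ℝ => (_root_.abs (K * |t|))) (nhds 0) (nhds 0) := by
      have hc2 : Continuous (fun t : ℝ => _root_.abs (K * |t|)) :=
        _root_.continuous_abs.comp (continuous_const.mul _root_.continuous_abs)
      have := hc2.tendsto (0:ℝ)
      simpa using this
    have := (ENNReal.continuous_ofReal.tendsto 0).comp
      (h2.mono_left (nhdsWithin_le_nhds (s := {0}ᶜ)))
    simpa only [ENNReal.ofReal_zero, Function.comp_def] using this
  have h0 : Tendsto (fun t : ℝ => ENNReal.ofReal (_root_.abs (K * |t|)) * eLpNorm w 2 volume)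
      (nhdsWithin 0 {0}ᶜ) (nhds 0) := by
    have := ENNReal.Tendsto.mul_const h1 (Or.inr hw.eLpNorm_ne_top)
    simpa using this
  exact tendsto_of_tendsto_of_tendsto_of_le_of_le' tendsto_const_nhds h0
    (Eventually.of_forall fun t => zero_le) hub

set_option maxHeartbeats 1000000 in
lemma part1_pointwise (f : 𝓢(ℝ, ℂ)) : ∃ K : ℝ, ∀ t : ℝ, t ≠ 0 → |t| ≤ 1 → ∀ x : ℝ,
    ‖(f (x + t) - f x) / (t : ℂ) - deriv (⇑f) x‖ ≤ (K * |t|) * ((1 + |x|) ^ 2)⁻¹ := by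
  set f1 : 𝓢(ℝ, ℂ) := SchwartzMap.derivCLM ℝ ℂ f with hf1def
  set f2 : 𝓢(ℝ, ℂ) := SchwartzMap.derivCLM ℝ ℂ f1 with hf2def
  obtain ⟨D, hD0, hD⟩ := schwartz_decay_aux f2 2
  have hfd : ∀ y : ℝ, HasDerivAt (⇑f) (f1 y) y := by
    intro y
    have h1 := (f.differentiable y).hasDerivAt
    rwa [← SchwartzMap.derivCLM_apply (𝕜 := ℝ)] at h1
  have hf1d : ∀ y : ℝ, HasDerivAt (⇑f1) (f2 y) y := by
    intro y
    have h1 := (f1.differentiable y).hasDerivAt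
    rwa [← SchwartzMap.derivCLM_apply (𝕜 := ℝ)] at h1
  refine ⟨4 * D, fun t ht htle x => ?_⟩
  have hpos : (0 : ℝ) < (1 + |x|) ^ 2 := by positivity
  set M : ℝ := 4 * D * ((1 + |x|) ^ 2)⁻¹ with hM
  have hbound2 : ∀ u ∈ Set.Icc (x - 1) (x + 1), ‖f2 u‖ ≤ M := by
    intro u hu
    rw [Set.mem_Icc] at hu
    have h1 : |x| ≤ |u| + 1 := by
      have h0 : |x - u| ≤ 1 := by rw [abs_le]; constructor <;> linarith
      have := abs_sub_abs_le_abs_sub x u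
      linarith
    have h2' : 1 + |x| ≤ 2 * (1 + |u|) := by have := abs_nonneg u; linarith
    have key : (1 + |x|) ^ 2 ≤ 4 * (1 + |u|) ^ 2 := by
      calc (1 + |x|) ^ 2 ≤ (2 * (1 + |u|)) ^ 2 := by
            apply pow_le_pow_left₀ (by positivity) h2'
        _ = 4 * (1 + |u|) ^ 2 := by ring
    have h2 : ‖f2 u‖ * (1 + |x|) ^ 2 ≤ 4 * D := by
      calc ‖f2 u‖ * (1 + |x|) ^ 2 ≤ ‖f2 u‖ * (4 * (1 + |u|) ^ 2) :=
            mul_le_mul_of_nonneg_left key (norm_nonneg _)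
        _ = 4 * (‖f2 u‖ * (1 + |u|) ^ 2) := by ring
        _ ≤ 4 * D := by linarith [hD u]
    have := (le_div_iff₀ hpos).2 h2
    rwa [div_eq_mul_inv] at this
  have hlip : ∀ s : ℝ, |s| ≤ 1 → ‖f1 (x + s) - f1 x‖ ≤ M * |s| := by
    intro s hs
    rw [abs_le] at hs
    have hmvt := Convex.norm_image_sub_le_of_norm_hasDerivWithin_le
      (f := ⇑f1) (f' := ⇑f2) (s := Set.Icc (x - 1) (x + 1)) (C := M)
      (x := x) (y := x + s)
      (fun u _ => (hf1d u).hasDerivWithinAt) hbound2 (convex_Icc _ _)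
      (by rw [Set.mem_Icc]; constructor <;> linarith)
      (by rw [Set.mem_Icc]; constructor <;> linarith)
    calc ‖f1 (x + s) - f1 x‖ ≤ M * ‖(x + s) - x‖ := hmvt
      _ = M * |s| := by rw [add_sub_cancel_left, Real.norm_eq_abs]
  have hg : ∀ s : ℝ, HasDerivAt (fun s : ℝ => f (x + s) - s • (f1 x : ℂ))
      (f1 (x + s) - f1 x) s := by
    intro s
    have h1 : HasDerivAt (fun s : ℝ => f (x + s)) (f1 (x + s)) s := by
      have := (hfd (x + s)).scomp s ((hasDerivAt_id s).const_add x)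
      simpa [Function.comp_def] using this
    have h2 : HasDerivAt (fun s : ℝ => s • (f1 x : ℂ)) (f1 x) s := by
      simpa using (hasDerivAt_id s).smul_const (f1 x : ℂ)
    exact h1.sub h2
  have hmvt2 := Convex.norm_image_sub_le_of_norm_hasDerivWithin_le
    (f := fun s : ℝ => f (x + s) - s • (f1 x : ℂ))
    (f' := fun s : ℝ => f1 (x + s) - f1 x)
    (s := Set.uIcc (0 : ℝ) t) (C := M * |t|)
    (fun u _ => (hg u).hasDerivWithinAt)
    (fun u hu => by
      have h3 : |u| ≤ |t| := abs_le_of_mem_uIcc' hu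
      have h4 := hlip u (h3.trans htle)
      have h5 : M * |u| ≤ M * |t| := by
        apply mul_le_mul_of_nonneg_left h3
        have : (0:ℝ) ≤ ((1 + |x|) ^ 2)⁻¹ := by positivity
        rw [hM]; positivity
      exact h4.trans h5)
    (convex_uIcc 0 t) Set.left_mem_uIcc Set.right_mem_uIcc
  rw [zero_smul, sub_zero, add_zero, sub_zero, Real.norm_eq_abs] at hmvt2
  have htpos : (0 : ℝ) < |t| := abs_pos.2 ht
  have heq : (f (x + t) - f x) / (t : ℂ) - deriv (⇑f) x
      = (f (x + t) - t • (f1 x : ℂ) - f x) / (t : ℂ) := by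
    have hd : deriv (⇑f) x = f1 x := (SchwartzMap.derivCLM_apply (𝕜 := ℝ) f x).symm
    rw [hd, Complex.real_smul]
    have htc : (t : ℂ) ≠ 0 := by exact_mod_cast ht
    field_simp
    ring
  rw [heq, norm_div, Complex.norm_real, Real.norm_eq_abs]
  rw [div_le_iff₀ htpos]
  calc ‖f (x + t) - t • (f1 x : ℂ) - f x‖ = ‖(f (x + t) - t • (f1 x : ℂ)) - f x‖ := by ring_nf
    _ ≤ M * |t| * |t| := hmvt2
    _ = 4 * D * |t| * ((1 + |x|) ^ 2)⁻¹ * |t| := by rw [hM]; ring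

lemma part2_pointwise (f : 𝓢(ℝ, ℂ)) : ∃ K : ℝ, ∀ t : ℝ, t ≠ 0 → ∀ x : ℝ,
    ‖(Complex.exp (-(Complex.I * x * t)) * f x - f x) / (t : ℂ) - (-Complex.I * x * f x)‖
      ≤ (K * |t|) * ((1 + |x|) ^ 2)⁻¹ := by
  obtain ⟨D, hD0, hD⟩ := schwartz_decay_aux f 4
  refine ⟨D, fun t ht x => ?_⟩
  have htpos : (0 : ℝ) < |t| := abs_pos.2 ht
  have htc : (t : ℂ) ≠ 0 := by exact_mod_cast ht
  have hpos : (0 : ℝ) < (1 + |x|) ^ 2 := by positivity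
  have heq : (Complex.exp (-(Complex.I * x * t)) * f x - f x) / (t : ℂ)
      - (-Complex.I * x * f x)
      = ((Complex.exp (-(Complex.I * x * t)) - 1 + Complex.I * x * t) / (t : ℂ)) * f x := by
    field_simp
    ring
  rw [heq, norm_mul, norm_div, Complex.norm_real, Real.norm_eq_abs]
  have hdiv : ‖Complex.exp (-(Complex.I * x * t)) - 1 + Complex.I * x * t‖ / |t|
      ≤ x ^ 2 * |t| := by
    rw [div_le_iff₀ htpos]
    exact key_quad x t
  have hbd : x ^ 2 * ‖f x‖ ≤ D * ((1 + |x|) ^ 2)⁻¹ := by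
    have h1 : x ^ 2 ≤ (1 + |x|) ^ 2 := by nlinarith [abs_nonneg x, _root_.sq_abs x]
    have h2 : x ^ 2 * ‖f x‖ * (1 + |x|) ^ 2 ≤ D := by
      calc x ^ 2 * ‖f x‖ * (1 + |x|) ^ 2 ≤ (1 + |x|) ^ 2 * ‖f x‖ * (1 + |x|) ^ 2 := by
            have := mul_nonneg (norm_nonneg (f x)) (le_of_lt hpos)
            nlinarith [norm_nonneg (f x)]
        _ = ‖f x‖ * (1 + |x|) ^ 4 := by ring
        _ ≤ D := hD x
    have := (le_div_iff₀ hpos).2 h2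
    rwa [div_eq_mul_inv] at this
  calc ‖Complex.exp (-(Complex.I * x * t)) - 1 + Complex.I * x * t‖ / |t| * ‖f x‖
      ≤ (x ^ 2 * |t|) * ‖f x‖ := mul_le_mul_of_nonneg_right hdiv (norm_nonneg _)
    _ = |t| * (x ^ 2 * ‖f x‖) := by ring
    _ ≤ |t| * (D * ((1 + |x|) ^ 2)⁻¹) := mul_le_mul_of_nonneg_left hbd (abs_nonneg t)
    _ = (D * |t|) * ((1 + |x|) ^ 2)⁻¹ := by ring

lemma part3_pointwise (f : 𝓢(ℝ, ℂ)) : ∃ K : ℝ, ∀ t : ℝ, t ≠ 0 → ∀ x : ℝ,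
    ‖(Complex.exp (-(Complex.I * t)) * f x - f x) / (t : ℂ) - (-Complex.I * f x)‖
      ≤ (K * |t|) * ((1 + |x|) ^ 2)⁻¹ := by
  obtain ⟨D, hD0, hD⟩ := schwartz_decay_aux f 2
  refine ⟨D, fun t ht x => ?_⟩
  have htpos : (0 : ℝ) < |t| := abs_pos.2 ht
  have htc : (t : ℂ) ≠ 0 := by exact_mod_cast ht
  have hpos : (0 : ℝ) < (1 + |x|) ^ 2 := by positivity
  have hq : ‖Complex.exp (-(Complex.I * t)) - 1 + Complex.I * t‖ ≤ |t| * |t| := by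
    have := key_quad 1 t
    simpa using this
  have heq : (Complex.exp (-(Complex.I * t)) * f x - f x) / (t : ℂ) - (-Complex.I * f x)
      = ((Complex.exp (-(Complex.I * t)) - 1 + Complex.I * t) / (t : ℂ)) * f x := by
    field_simp
    ring
  rw [heq, norm_mul, norm_div, Complex.norm_real, Real.norm_eq_abs]
  have hdiv : ‖Complex.exp (-(Complex.I * t)) - 1 + Complex.I * t‖ / |t| ≤ |t| := by
    rw [div_le_iff₀ htpos]
    exact hq
  have hbd : ‖f x‖ ≤ D * ((1 + |x|) ^ 2)⁻¹ := by
    have := (le_div_iff₀ hpos).2 (hD x)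
    rwa [div_eq_mul_inv] at this
  calc ‖Complex.exp (-(Complex.I * t)) - 1 + Complex.I * t‖ / |t| * ‖f x‖
      ≤ |t| * ‖f x‖ := mul_le_mul_of_nonneg_right hdiv (norm_nonneg _)
    _ ≤ |t| * (D * ((1 + |x|) ^ 2)⁻¹) := mul_le_mul_of_nonneg_left hbd (abs_nonneg t)
    _ = (D * |t|) * ((1 + |x|) ^ 2)⁻¹ := by ring

lemma eventually_abs_le_one : ∀ᶠ t : ℝ in nhdsWithin (0:ℝ) {0}ᶜ, |t| ≤ 1 := by
  apply eventually_nhdsWithin_of_eventually_nhds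
  have h : Tendsto (fun t : ℝ => |t|) (nhds 0) (nhds 0) := by
    simpa using _root_.continuous_abs.tendsto (0:ℝ)
  exact (h.eventually_lt_const one_pos).mono fun t ht => le_of_lt ht

/-- For every Schwartz `f`, as `t → 0`, `t ≠ 0`: `(T((t,0,0))f − f)/t → f′`,
`(T((0,t,0))f − f)/t → (x ↦ −i·x·f(x))`, and `(T((0,0,t))f − f)/t → −i·f`,
all in `L²(ℝ,ℂ)`-norm. -/
theorem stmt5 (f : 𝓢(ℝ, ℂ)) :
    Tendsto (fun t : ℝ =>
        eLpNorm (fun x : ℝ => (Tfun (t, 0, 0) (⇑f) x - f x) / (t : ℂ) - deriv (⇑f) x)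
          2 (volume : Measure ℝ)) (nhdsWithin 0 {0}ᶜ) (nhds 0) ∧
    Tendsto (fun t : ℝ =>
        eLpNorm (fun x : ℝ => (Tfun (0, t, 0) (⇑f) x - f x) / (t : ℂ) -
          (-(Complex.I) * x * f x)) 2 (volume : Measure ℝ)) (nhdsWithin 0 {0}ᶜ) (nhds 0) ∧
    Tendsto (fun t : ℝ =>
        eLpNorm (fun x : ℝ => (Tfun (0, 0, t) (⇑f) x - f x) / (t : ℂ) -
          (-(Complex.I) * f x)) 2 (volume : Measure ℝ)) (nhdsWithin 0 {0}ᶜ) (nhds 0) := by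
  refine ⟨?_, ?_, ?_⟩
  · obtain ⟨K, hK⟩ := part1_pointwise f
    apply squeeze_aux (G := fun t => fun x : ℝ =>
      (Tfun (t, 0, 0) (⇑f) x - f x) / (t : ℂ) - deriv (⇑f) x) memLp_w K
    filter_upwards [eventually_mem_nhdsWithin, eventually_abs_le_one] with t ht htle x
    have h1 : Tfun (t, 0, 0) (⇑f) x = f (x + t) := by simp [Tfun]
    rw [h1]
    exact hK t ht htle x
  · obtain ⟨K, hK⟩ := part2_pointwise f
    apply squeeze_aux (G := fun t => fun x : ℝ =>
      (Tfun (0, t, 0) (⇑f) x - f x) / (t : ℂ) - (-(Complex.I) * x * f x)) memLp_w K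
    filter_upwards [eventually_mem_nhdsWithin] with t ht x
    have h1 : Tfun (0, t, 0) (⇑f) x = Complex.exp (-(Complex.I * x * t)) * f x := by
      simp [Tfun]
    rw [h1]
    exact hK t ht x
  · obtain ⟨K, hK⟩ := part3_pointwise f
    apply squeeze_aux (G := fun t => fun x : ℝ =>
      (Tfun (0, 0, t) (⇑f) x - f x) / (t : ℂ) - (-(Complex.I) * f x)) memLp_w K
    filter_upwards [eventually_mem_nhdsWithin] with t ht x
    have h1 : Tfun (0, 0, t) (⇑f) x = Complex.exp (-(Complex.I * t)) * f x := by
      simp [Tfun]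
    rw [h1]
    exact hK t ht x
end

section
/- For each i ∈ {1,2,3}, the resolvent set of Xᵢ is empty in the following sense: for every λ ∈ ℂ there exists no continuous linear operator R : ℓ² → ℓ² such that R(λ·v − Xᵢv) = v for every finitely supported sequence v : ℕ → ℂ³. -/
/-- `(X₁v)(n) = ((n+1)·b(n), 0, 0)` for `v(n) = (a(n), b(n), c(n))`. -/
def X1 (v : ℕ → ℂ × ℂ × ℂ) : ℕ → ℂ × ℂ × ℂ :=
  fun n => (((n : ℂ) + 1) * (v n).2.1, 0, 0)

/-- `(X₂v)(n) = (0, (n+1)·c(n), 0)`. -/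
def X2 (v : ℕ → ℂ × ℂ × ℂ) : ℕ → ℂ × ℂ × ℂ :=
  fun n => (0, ((n : ℂ) + 1) * (v n).2.2, 0)

/-- `(X₃v)(n) = ((n+1)²·c(n), 0, 0)`. -/
def X3 (v : ℕ → ℂ × ℂ × ℂ) : ℕ → ℂ × ℂ × ℂ :=
  fun n => ((((n : ℂ) + 1)) ^ 2 * (v n).2.2, 0, 0)

local notation "H" => lp (fun _ : ℕ => ℂ × ℂ × ℂ) 2

lemma key_aux (x y : ℕ → ℂ × ℂ × ℂ)
    (hgrow : ∀ C : ℝ, ∃ n, C * ‖y n‖ < ‖x n‖)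
    (R : H →L[ℂ] H)
    (hR : ∀ n : ℕ, R (lp.single 2 n (y n)) = lp.single 2 n (x n)) : False := by
  obtain ⟨n, hn⟩ := hgrow ‖R‖
  have h1 := R.le_opNorm (lp.single 2 n (y n))
  have hp : (0:ℝ) < (2 : ENNReal).toReal := by norm_num
  rw [hR n, lp.norm_single (E := fun _ : ℕ => ℂ × ℂ × ℂ) (p := 2) (by norm_num) n (x n),
    lp.norm_single (E := fun _ : ℕ => ℂ × ℂ × ℂ) (p := 2) (by norm_num) n (y n)] at h1
  linarith

lemma single_support_finite (n : ℕ) (a : ℂ × ℂ × ℂ) :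
    (Function.support (⇑(lp.single (E := fun _ : ℕ => ℂ × ℂ × ℂ) 2 n a))).Finite := by
  apply Set.Finite.subset (Set.finite_singleton n)
  intro m hm
  simp only [Function.mem_support] at hm
  by_contra h
  exact hm (lp.single_apply_ne (E := fun _ : ℕ => ℂ × ℂ × ℂ) 2 n a h)

lemma norm_nat_add_one (n : ℕ) : ‖((n : ℂ) + 1)‖ = (n : ℝ) + 1 := by
  have : ((n : ℂ) + 1) = ((n + 1 : ℕ) : ℂ) := by push_cast; ring
  rw [this, Complex.norm_natCast]
  push_cast; ring

lemma exists_big (C : ℝ) (l : ℂ) (hl : l ≠ 0) :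
    ∃ n : ℕ, C * ‖l‖ < ((n : ℝ) + 1) / ‖l‖ := by
  obtain ⟨n, hn⟩ := exists_nat_gt (C * ‖l‖ * ‖l‖)
  refine ⟨n, ?_⟩
  have hl' : (0:ℝ) < ‖l‖ := norm_pos_iff.mpr hl
  rw [lt_div_iff₀ hl']
  nlinarith

/-- The resolvent set of each `Xᵢ` is empty: for every `λ ∈ ℂ` there is no continuous
linear operator `R : ℓ² → ℓ²` with `R(λ·v − Xᵢv) = v` for every finitely supported `v`
(where `w, u ∈ ℓ²` denote the elements with coordinates `λ·v(n) − Xᵢv(n)` and `v(n)`). -/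
theorem stmt14 :
    ∀ Xi ∈ [X1, X2, X3], ∀ l : ℂ,
      ¬ ∃ R : lp (fun _ : ℕ => ℂ × ℂ × ℂ) 2 →L[ℂ] lp (fun _ : ℕ => ℂ × ℂ × ℂ) 2,
        ∀ v : ℕ → ℂ × ℂ × ℂ, (Function.support v).Finite →
          ∀ w u : lp (fun _ : ℕ => ℂ × ℂ × ℂ) 2,
            (⇑w = fun n => l • v n - Xi v n) → ⇑u = v → R w = u := by
  intro Xi hXi l ⟨R, hR⟩
  simp only [List.mem_cons, List.mem_singleton, List.not_mem_nil, or_false] at hXi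
  rcases hXi with rfl | rfl | rfl
  -- X1
  · rcases eq_or_ne l 0 with rfl | hl
    · refine key_aux (fun _ => ((1:ℂ), 0, 0)) (fun _ => 0)
        (fun C => ⟨0, by simp [Prod.norm_def]⟩) R ?_
      intro n
      refine hR _ (single_support_finite n _) _ _ ?_ rfl
      funext m
      rcases eq_or_ne m n with rfl | hmn
      · simp [X1, lp.single_apply_self]; rfl
      · simp [X1, lp.single_apply, hmn]; rfl
    · refine key_aux (fun n => (((n : ℂ) + 1) / l, 1, 0)) (fun _ => (0, l, 0)) ?_ R ?_
      · intro C
        obtain ⟨n, hn⟩ := exists_big C l hl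
        refine ⟨n, ?_⟩
        have hy : ‖((0:ℂ), l, (0:ℂ))‖ = ‖l‖ := by simp [Prod.norm_def]
        have hx : ((n:ℝ)+1)/‖l‖ ≤ ‖(((n:ℂ)+1)/l, (1:ℂ), (0:ℂ))‖ := by
          refine le_trans ?_ (norm_fst_le _)
          rw [norm_div, norm_nat_add_one]
        show C * ‖((0:ℂ), l, (0:ℂ))‖ < ‖(((n:ℂ)+1)/l, (1:ℂ), (0:ℂ))‖
        rw [hy]; exact hn.trans_le hx
      · intro n
        refine hR _ (single_support_finite n _) _ _ ?_ rfl
        funext m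
        rcases eq_or_ne m n with rfl | hmn
        · have h0 : l * (((m : ℂ) + 1) / l) - ((m : ℂ) + 1) = 0 := by field_simp; ring
          simp [X1, lp.single_apply_self, Prod.ext_iff, Prod.smul_def, h0]
        · simp [X1, lp.single_apply, hmn]; rfl
  -- X2
  · rcases eq_or_ne l 0 with rfl | hl
    · refine key_aux (fun _ => ((1:ℂ), 0, 0)) (fun _ => 0)
        (fun C => ⟨0, by simp [Prod.norm_def]⟩) R ?_
      intro n
      refine hR _ (single_support_finite n _) _ _ ?_ rfl
      funext m
      rcases eq_or_ne m n with rfl | hmn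
      · simp [X2, lp.single_apply_self]; rfl
      · simp [X2, lp.single_apply, hmn]; rfl
    · refine key_aux (fun n => (0, ((n : ℂ) + 1) / l, 1)) (fun _ => (0, 0, l)) ?_ R ?_
      · intro C
        obtain ⟨n, hn⟩ := exists_big C l hl
        refine ⟨n, ?_⟩
        have hy : ‖((0:ℂ), (0:ℂ), l)‖ = ‖l‖ := by simp [Prod.norm_def]
        have hx : ((n:ℝ)+1)/‖l‖ ≤ ‖((0:ℂ), ((n:ℂ)+1)/l, (1:ℂ))‖ := by
          refine le_trans ?_ ((norm_fst_le _).trans (norm_snd_le _))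
          rw [norm_div, norm_nat_add_one]
        show C * ‖((0:ℂ), (0:ℂ), l)‖ < ‖((0:ℂ), ((n:ℂ)+1)/l, (1:ℂ))‖
        rw [hy]; exact hn.trans_le hx
      · intro n
        refine hR _ (single_support_finite n _) _ _ ?_ rfl
        funext m
        rcases eq_or_ne m n with rfl | hmn
        · have h0 : l * (((m : ℂ) + 1) / l) - ((m : ℂ) + 1) = 0 := by field_simp; ring
          simp [X2, lp.single_apply_self, Prod.ext_iff, Prod.smul_def, h0]
        · simp [X2, lp.single_apply, hmn]; rfl
  -- X3
  · rcases eq_or_ne l 0 with rfl | hl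
    · refine key_aux (fun _ => ((1:ℂ), 0, 0)) (fun _ => 0)
        (fun C => ⟨0, by simp [Prod.norm_def]⟩) R ?_
      intro n
      refine hR _ (single_support_finite n _) _ _ ?_ rfl
      funext m
      rcases eq_or_ne m n with rfl | hmn
      · simp [X3, lp.single_apply_self]; rfl
      · simp [X3, lp.single_apply, hmn]; rfl
    · refine key_aux (fun n => (((n : ℂ) + 1) ^ 2 / l, 0, 1)) (fun _ => (0, 0, l)) ?_ R ?_
      · intro C
        obtain ⟨n, hn⟩ := exists_big C l hl
        refine ⟨n, ?_⟩
        have hy : ‖((0:ℂ), (0:ℂ), l)‖ = ‖l‖ := by simp [Prod.norm_def]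
        have hl' : (0:ℝ) < ‖l‖ := norm_pos_iff.mpr hl
        have hx : ((n:ℝ)+1)/‖l‖ ≤ ‖(((n:ℂ)+1)^2/l, (0:ℂ), (1:ℂ))‖ := by
          refine le_trans ?_ (norm_fst_le _)
          rw [norm_div, norm_pow, norm_nat_add_one]
          have hsq : ((n:ℝ) + 1) ≤ ((n:ℝ) + 1) ^ 2 := by nlinarith [Nat.cast_nonneg (α := ℝ) n]
          gcongr
        show C * ‖((0:ℂ), (0:ℂ), l)‖ < ‖(((n:ℂ)+1)^2/l, (0:ℂ), (1:ℂ))‖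
        rw [hy]; exact hn.trans_le hx
      · intro n
        refine hR _ (single_support_finite n _) _ _ ?_ rfl
        funext m
        rcases eq_or_ne m n with rfl | hmn
        · have h0 : l * (((m : ℂ) + 1) ^ 2 / l) - ((m : ℂ) + 1) ^ 2 = 0 := by field_simp; ring
          simp [X3, lp.single_apply_self, Prod.ext_iff, Prod.smul_def, h0]
        · simp [X3, lp.single_apply, hmn]; rfl
end

section
/- Let Φ be a normed complex vector space, let d ∈ ℕ, let X₁,…,X_d : Φ → Φ be linear maps, and define norms Nₙ on Φ recursively by N₀(φ) = ‖φ‖ and Nₙ₊₁(φ)² = Σᵢ₌₁^d Nₙ(Xᵢφ)² + Nₙ(φ)². Let A : Φ → Φ be a linear map, ω ≥ 0, and let fᵢⱼ ∈ ℂ (1 ≤ i, j ≤ d) be scalars such that N₀(Aφ) ≤ ω·N₀(φ) for all φ ∈ Φ and Xᵢ(Aφ) = A(Σⱼ₌₁^d fᵢⱼ·Xⱼφ) for all φ ∈ Φ and all i. Then for every n ∈ ℕ and every φ ∈ Φ, Nₙ(Aφ) ≤ ω·(1 + Σᵢ,ⱼ |fᵢⱼ|)ⁿ·Nₙ(φ).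 -/
/-- The recursively defined norms `N₀(φ) = ‖φ‖`,
`Nₙ₊₁(φ)² = Σᵢ Nₙ(Xᵢφ)² + Nₙ(φ)²` built from a family of linear maps `X₁,…,X_d`. -/
noncomputable def NF {Φ : Type*} [NormedAddCommGroup Φ] [NormedSpace ℂ Φ] {d : ℕ}
    (X : Fin d → Φ →ₗ[ℂ] Φ) : ℕ → Φ → ℝ
  | 0, φ => ‖φ‖
  | n + 1, φ => Real.sqrt ((∑ i : Fin d, (NF X n (X i φ)) ^ 2) + (NF X n φ) ^ 2)



section helpers

variable {Φ : Type*} [NormedAddCommGroup Φ] [NormedSpace ℂ Φ] {d : ℕ}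
  (X : Fin d → Φ →ₗ[ℂ] Φ)

lemma NF_nonneg : ∀ (n : ℕ) (φ : Φ), 0 ≤ NF X n φ
  | 0, φ => norm_nonneg φ
  | n + 1, φ => Real.sqrt_nonneg _

lemma NF_smul (n : ℕ) (c : ℂ) (φ : Φ) : NF X n (c • φ) = ‖c‖ * NF X n φ := by
  induction n generalizing φ with
  | zero => simp [NF, norm_smul]
  | succ n ih =>
    simp only [NF, map_smul, ih]
    rw [show (∑ i : Fin d, (‖c‖ * NF X n (X i φ)) ^ 2) + (‖c‖ * NF X n φ) ^ 2
        = ‖c‖ ^ 2 * ((∑ i : Fin d, (NF X n (X i φ)) ^ 2) + (NF X n φ) ^ 2) by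
      simp [mul_pow, Finset.mul_sum, mul_add]]
    rw [Real.sqrt_mul (sq_nonneg _), Real.sqrt_sq (norm_nonneg c)]

lemma NF_zero (n : ℕ) : NF X n (0 : Φ) = 0 := by
  have := NF_smul X n 0 0
  simpa using this

lemma sqrt_sum_sq_le {m : ℕ} (a b c : Fin m → ℝ) (ha : ∀ i, 0 ≤ a i)
    (h : ∀ i, a i ≤ b i + c i) :
    Real.sqrt (∑ i, a i ^ 2) ≤ Real.sqrt (∑ i, b i ^ 2) + Real.sqrt (∑ i, c i ^ 2) := by
  have key : ∀ x : EuclideanSpace ℝ (Fin m), ‖x‖ = Real.sqrt (∑ i, (x i) ^ 2) := by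
    intro x
    rw [EuclideanSpace.norm_eq]
    congr 1
    exact Finset.sum_congr rfl fun i _ => by rw [Real.norm_eq_abs, sq_abs]
  set B : EuclideanSpace ℝ (Fin m) := WithLp.toLp 2 (fun i => b i) with hB
  set C : EuclideanSpace ℝ (Fin m) := WithLp.toLp 2 (fun i => c i) with hC
  have h1 : Real.sqrt (∑ i, a i ^ 2) ≤ ‖B + C‖ := by
    rw [key]
    apply Real.sqrt_le_sqrt
    apply Finset.sum_le_sum
    intro i _
    have : (B + C) i = b i + c i := rfl
    rw [this]
    exact sq_le_sq' (by linarith [ha i, h i]) (h i)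
  calc Real.sqrt (∑ i, a i ^ 2) ≤ ‖B + C‖ := h1
    _ ≤ ‖B‖ + ‖C‖ := norm_add_le _ _
    _ = _ := by rw [key, key]

lemma NF_add (n : ℕ) (φ ψ : Φ) : NF X n (φ + ψ) ≤ NF X n φ + NF X n ψ := by
  induction n generalizing φ ψ with
  | zero => exact norm_add_le φ ψ
  | succ n ih =>
    simp only [NF, map_add]
    -- use snoc vectors over Fin (d+1)
    have := sqrt_sum_sq_le (m := d + 1)
      (Fin.snoc (fun i => NF X n (X i φ + X i ψ)) (NF X n (φ + ψ)))
      (Fin.snoc (fun i => NF X n (X i φ)) (NF X n φ))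
      (Fin.snoc (fun i => NF X n (X i ψ)) (NF X n ψ))
      (fun i => by
        induction i using Fin.lastCases with
        | last => simpa using NF_nonneg X n (φ + ψ)
        | cast i => simpa using NF_nonneg X n (X i φ + X i ψ))
      (fun i => by
        induction i using Fin.lastCases with
        | last => simpa using ih φ ψ
        | cast i => simpa using ih (X i φ) (X i ψ))
    simpa [Fin.sum_univ_castSucc] using this

lemma NF_sum (n : ℕ) {ι : Type*} (s : Finset ι) (g : ι → Φ) :
    NF X n (∑ j ∈ s, g j) ≤ ∑ j ∈ s, NF X n (g j) := by
  classical
  induction s using Finset.induction with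
  | empty => simp [NF_zero]
  | insert _ _ hj ih =>
    rw [Finset.sum_insert hj, Finset.sum_insert hj]
    exact le_trans (NF_add X n _ _) (add_le_add_right ih _)

lemma NF_le_succ (n : ℕ) (φ : Φ) : NF X n φ ≤ NF X (n + 1) φ := by
  show NF X n φ ≤ Real.sqrt ((∑ i : Fin d, (NF X n (X i φ)) ^ 2) + (NF X n φ) ^ 2)
  have h := Real.abs_le_sqrt (x := NF X n φ)
    (y := (∑ i : Fin d, (NF X n (X i φ)) ^ 2) + (NF X n φ) ^ 2) (by
    have : 0 ≤ ∑ i : Fin d, (NF X n (X i φ)) ^ 2 :=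
      Finset.sum_nonneg fun i _ => sq_nonneg _
    linarith)
  rwa [abs_of_nonneg (NF_nonneg X n φ)] at h

lemma NF_X_le (n : ℕ) (i : Fin d) (φ : Φ) : NF X n (X i φ) ≤ NF X (n + 1) φ := by
  show NF X n (X i φ) ≤ Real.sqrt ((∑ j : Fin d, (NF X n (X j φ)) ^ 2) + (NF X n φ) ^ 2)
  have h1 : (NF X n (X i φ)) ^ 2 ≤ ∑ j : Fin d, (NF X n (X j φ)) ^ 2 :=
    Finset.single_le_sum (f := fun j => (NF X n (X j φ)) ^ 2) (fun j _ => sq_nonneg _)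
      (Finset.mem_univ i)
  have h := Real.abs_le_sqrt (x := NF X n (X i φ))
    (y := (∑ j : Fin d, (NF X n (X j φ)) ^ 2) + (NF X n φ) ^ 2)
    (by nlinarith [sq_nonneg (NF X n φ)])
  rwa [abs_of_nonneg (NF_nonneg X n (X i φ))] at h

end helpers



/-- The key norm-scale estimate: if `N₀(Aφ) ≤ ω·N₀(φ)` and
`Xᵢ(Aφ) = A(Σⱼ fᵢⱼ·Xⱼφ)` for all `φ` and `i`, then
`Nₙ(Aφ) ≤ ω·(1 + Σᵢⱼ |fᵢⱼ|)ⁿ·Nₙ(φ)` for all `n` and `φ`. -/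
theorem stmt15 {Φ : Type*} [NormedAddCommGroup Φ] [NormedSpace ℂ Φ] {d : ℕ}
    (X : Fin d → Φ →ₗ[ℂ] Φ) (A : Φ →ₗ[ℂ] Φ) (ω : ℝ) (hω : 0 ≤ ω)
    (f : Fin d → Fin d → ℂ)
    (h0 : ∀ φ : Φ, ‖A φ‖ ≤ ω * ‖φ‖)
    (hconj : ∀ (i : Fin d) (φ : Φ), X i (A φ) = A (∑ j : Fin d, f i j • X j φ)) :
    ∀ (n : ℕ) (φ : Φ),
      NF X n (A φ) ≤ ω * (1 + ∑ i : Fin d, ∑ j : Fin d, ‖f i j‖) ^ n *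
        NF X n φ := by
  intro n
  set S := ∑ i : Fin d, ∑ j : Fin d, ‖f i j‖ with hS
  have hSnn : 0 ≤ S :=
    Finset.sum_nonneg fun i _ => Finset.sum_nonneg fun j _ => norm_nonneg _
  induction n with
  | zero => intro φ; simpa [NF] using h0 φ
  | succ n ih =>
    intro φ
    set C := ω * (1 + S) ^ n with hC
    have hCnn : 0 ≤ C := mul_nonneg hω (pow_nonneg (by linarith) n)
    set M := NF X (n + 1) φ with hM
    have hMnn : 0 ≤ M := NF_nonneg X (n + 1) φ
    have hterm : ∀ i : Fin d,
        NF X n (X i (A φ)) ≤ C * ((∑ j : Fin d, ‖f i j‖) * M) := by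
      intro i
      rw [hconj i φ]
      calc NF X n (A (∑ j : Fin d, f i j • X j φ))
          ≤ C * NF X n (∑ j : Fin d, f i j • X j φ) := ih _
        _ ≤ C * ((∑ j : Fin d, ‖f i j‖) * M) := by
            apply mul_le_mul_of_nonneg_left _ hCnn
            calc NF X n (∑ j : Fin d, f i j • X j φ)
                ≤ ∑ j : Fin d, NF X n (f i j • X j φ) := NF_sum X n _ _
              _ = ∑ j : Fin d, ‖f i j‖ * NF X n (X j φ) := by
                  refine Finset.sum_congr rfl fun j _ => ?_
                  rw [NF_smul]
              _ ≤ ∑ j : Fin d, ‖f i j‖ * M := by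
                  refine Finset.sum_le_sum fun j _ => ?_
                  exact mul_le_mul_of_nonneg_left (NF_X_le X n j φ) (norm_nonneg _)
              _ = (∑ j : Fin d, ‖f i j‖) * M := (Finset.sum_mul ..).symm
    have hlast : NF X n (A φ) ≤ C * M :=
      le_trans (ih φ) (mul_le_mul_of_nonneg_left (NF_le_succ X n φ) hCnn)
    have hsum : (∑ i : Fin d, (NF X n (X i (A φ))) ^ 2) + (NF X n (A φ)) ^ 2
        ≤ (C * (1 + S) * M) ^ 2 := by
      have h1 : ∑ i : Fin d, (NF X n (X i (A φ))) ^ 2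
          ≤ ∑ i : Fin d, (C * ((∑ j : Fin d, ‖f i j‖) * M)) ^ 2 :=
        Finset.sum_le_sum fun i _ =>
          pow_le_pow_left₀ (NF_nonneg X n _) (hterm i) 2
      have h2 : (NF X n (A φ)) ^ 2 ≤ (C * M) ^ 2 :=
        pow_le_pow_left₀ (NF_nonneg X n _) hlast 2
      have h3 : ∑ i : Fin d, (∑ j : Fin d, ‖f i j‖) ^ 2 ≤ S ^ 2 := by
        rw [hS]
        exact Finset.sum_sq_le_sq_sum_of_nonneg fun i _ =>
          Finset.sum_nonneg fun j _ => norm_nonneg _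
      have h4 : ∑ i : Fin d, (C * ((∑ j : Fin d, ‖f i j‖) * M)) ^ 2
          = (C * M) ^ 2 * ∑ i : Fin d, (∑ j : Fin d, ‖f i j‖) ^ 2 := by
        rw [Finset.mul_sum]; refine Finset.sum_congr rfl fun i _ => by ring
      nlinarith [sq_nonneg (C * M), mul_le_mul_of_nonneg_left h3 (sq_nonneg (C * M))]
    have hrfl : NF X (n + 1) (A φ)
        = Real.sqrt ((∑ i : Fin d, (NF X n (X i (A φ))) ^ 2) + (NF X n (A φ)) ^ 2) := by
      rw [NF]
    calc NF X (n + 1) (A φ)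
        = Real.sqrt ((∑ i : Fin d, (NF X n (X i (A φ))) ^ 2) + (NF X n (A φ)) ^ 2) := hrfl
      _ ≤ Real.sqrt ((C * (1 + S) * M) ^ 2) := Real.sqrt_le_sqrt hsum
      _ = C * (1 + S) * M :=
          Real.sqrt_sq (mul_nonneg (mul_nonneg hCnn (by linarith)) hMnn)
      _ = ω * (1 + S) ^ (n + 1) * M := by rw [hC]; ring
end

section
/- Let Φ be a Hausdorff locally convex topological vector space over ℂ, let U, V : ℝ → (Φ →L Φ) be families of continuous linear operators, and let X, Y : Φ →L Φ be continuous linear operators such that: (i) for every φ ∈ Φ and t ∈ ℝ, (U(s)φ − U(t)φ)/(s−t) converges to X(U(t)φ) as s → t, s ≠ t; (ii) likewise (V(s)φ − V(t)φ)/(s−t) converges to Y(V(t)φ); and (iii) U is locally equicontinuous, i.e. for every compact K ⊆ ℝ the family {U(t) : t ∈ K} is equicontinuous. Then for every φ ∈ Φ and t ∈ ℝ, (U(s)(V(s)φ) − U(t)(V(t)φ))/(s−t) converges, as s → t, s ≠ t, to X(U(t)(V(t)φ)) + U(t)(Y(V(t)φ)). -/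
open Filter Topology

/-- The product (Leibniz) rule for differentiable one-parameter operator families in a
locally convex space (Proposition 3.2): if `U` and `V` are pointwise differentiable with
derivatives `X∘U` and `Y∘V` respectively, and `U` is locally equicontinuous, then
`s ↦ U(s)(V(s)φ)` is differentiable with derivative
`X(U(t)(V(t)φ)) + U(t)(Y(V(t)φ))`. -/
theorem stmt18 {Φ : Type*} [AddCommGroup Φ] [Module ℝ Φ] [Module ℂ Φ]
    [IsScalarTower ℝ ℂ Φ] [UniformSpace Φ] [IsUniformAddGroup Φ] [ContinuousSMul ℂ Φ]
    [ContinuousSMul ℝ Φ] [T2Space Φ] [LocallyConvexSpace ℝ Φ]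
    (U V : ℝ → Φ →L[ℂ] Φ) (X Y : Φ →L[ℂ] Φ)
    (hU : ∀ (φ : Φ) (t : ℝ),
      Tendsto (fun s : ℝ => (s - t)⁻¹ • (U s φ - U t φ)) (nhdsWithin t {t}ᶜ)
        (nhds (X (U t φ))))
    (hV : ∀ (φ : Φ) (t : ℝ),
      Tendsto (fun s : ℝ => (s - t)⁻¹ • (V s φ - V t φ)) (nhdsWithin t {t}ᶜ)
        (nhds (Y (V t φ))))
    (hUequi : ∀ K : Set ℝ, IsCompact K → Equicontinuous (fun k : K => ⇑(U k))) :
    ∀ (φ : Φ) (t : ℝ),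
      Tendsto (fun s : ℝ => (s - t)⁻¹ • (U s (V s φ) - U t (V t φ)))
        (nhdsWithin t {t}ᶜ) (nhds (X (U t (V t φ)) + U t (Y (V t φ)))) := by
  intro φ t
  set w := Y (V t φ) with hw
  -- pointwise continuity of `s ↦ U s ψ` along the punctured neighborhood
  have hcont : ∀ ψ : Φ, Tendsto (fun s => U s ψ) (nhdsWithin t {t}ᶜ) (nhds (U t ψ)) := by
    intro ψ
    have h1 : Tendsto (fun s : ℝ => (s - t)) (nhdsWithin t {t}ᶜ) (nhds 0) := by
      have h0 : Tendsto (fun s : ℝ => s - t) (nhds t) (nhds (t - t)) :=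
        (continuous_id.sub continuous_const).tendsto t
      rw [sub_self] at h0
      exact h0.mono_left nhdsWithin_le_nhds
    have h2 := h1.smul (hU ψ t)
    rw [zero_smul] at h2
    have h3 : Tendsto (fun s => U s ψ - U t ψ) (nhdsWithin t {t}ᶜ) (nhds 0) := by
      refine h2.congr' ?_
      filter_upwards [self_mem_nhdsWithin] with s hs
      have hst : s - t ≠ 0 := sub_ne_zero.2 hs
      rw [smul_smul, mul_inv_cancel₀ hst, one_smul]
    have := h3.add_const (U t ψ)
    simpa using this
  -- equicontinuity on a compact interval around `t`
  have hE := (hUequi (Set.Icc (t - 1) (t + 1)) isCompact_Icc) 0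
  have hvm : Tendsto (fun s : ℝ => (s - t)⁻¹ • (V s φ - V t φ) - w)
      (nhdsWithin t {t}ᶜ) (nhds 0) := by
    simpa [hw] using (hV φ t).sub_const w
  have hmem : ∀ᶠ s in nhdsWithin t {t}ᶜ, s ∈ Set.Icc (t - 1) (t + 1) :=
    mem_nhdsWithin_of_mem_nhds (Icc_mem_nhds (by linarith) (by linarith))
  have h0 : Tendsto (fun s : ℝ => U s ((s - t)⁻¹ • (V s φ - V t φ) - w))
      (nhdsWithin t {t}ᶜ) (nhds 0) := by
    rw [Uniform.tendsto_nhds_right, Filter.tendsto_def]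
    intro W hW
    have hev := hvm.eventually (hE W hW)
    filter_upwards [hev, hmem] with s hs hsK
    have := hs ⟨s, hsK⟩
    simpa using this
  have hUv : Tendsto (fun s : ℝ => U s ((s - t)⁻¹ • (V s φ - V t φ)))
      (nhdsWithin t {t}ᶜ) (nhds (U t w)) := by
    have h4 := h0.add (hcont w)
    rw [zero_add] at h4
    refine h4.congr fun s => ?_
    rw [map_sub, sub_add_cancel]
  have hfinal := hUv.add (hU (V t φ) t)
  rw [add_comm] at hfinal
  refine Tendsto.congr' ?_ hfinal
  filter_upwards [self_mem_nhdsWithin] with s hs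
  have h1 : U s ((s - t)⁻¹ • (V s φ - V t φ))
      = (s - t)⁻¹ • (U s (V s φ) - U s (V t φ)) := by
    rw [ContinuousLinearMap.map_smul_of_tower, map_sub]
  rw [h1, ← smul_add, sub_add_sub_cancel]
end

section
/- Let 𝔤 be a finite-dimensional real Lie algebra equipped with a norm, let Φ be a Hausdorff locally convex topological vector space over ℂ, and let T : 𝔤 → (Φ →L Φ) be a real-linear map satisfying T([x,y]) = T(x)∘T(y) − T(y)∘T(x) for all x, y ∈ 𝔤. Fix x ∈ 𝔤 and let U : ℝ → (Φ →L Φ) be a locally equicontinuous one-parameter group of continuous linear operators (U(0) = id, U(s+t) = U(s)∘U(t), and {U(t) : t ∈ K} equicontinuous for each compact K ⊆ ℝ) such that for every φ ∈ Φ and t ∈ ℝ, (U(s)φ − U(t)φ)/(s−t) converges to T(x)(U(t)φ) as s → t, s ≠ t. Then for every y ∈ 𝔤, t ∈ ℝ and φ ∈ Φ, U(t)(T(y)(U(−t)φ)) = T(exp(t·ad x)y)φ, where ad x : 𝔤 → 𝔤 is z ↦ [x,z] and exp(t·ad x) is the exponential of the endomorphism t·ad x of the finite-dimensional normed space 𝔤.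 -/
open Filter Topology

/-- Auxiliary derivative predicate: `g` has derivative `L` at `s₀` in the sense of
convergence of difference quotients. -/
abbrev Dder {Φ : Type*} [AddCommGroup Φ] [SMul ℝ Φ] [TopologicalSpace Φ]
    (g : ℝ → Φ) (s₀ : ℝ) (L : Φ) : Prop :=
  Tendsto (fun s => (s - s₀)⁻¹ • (g s - g s₀)) (𝓝[≠] s₀) (𝓝 L)

/-- Operator analogue of the inner-automorphism formula (Proposition 3.3): if `T` is a
representation of a finite-dimensional normed real Lie algebra `𝔤` by continuous linear
operators on a Hausdorff locally convex space `Φ`, and `U` is a locally equicontinuous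
one-parameter group generated by `T(x)`, then
`U(t)(T(y)(U(−t)φ)) = T(exp(t·ad x)y)φ`. -/
theorem stmt19 {𝔤 : Type*} [NormedAddCommGroup 𝔤] [NormedSpace ℝ 𝔤]
    [FiniteDimensional ℝ 𝔤]
    (bracket : 𝔤 →ₗ[ℝ] 𝔤 →ₗ[ℝ] 𝔤)
    (hskew : ∀ x : 𝔤, bracket x x = 0)
    (hjacobi : ∀ x y z : 𝔤,
      bracket x (bracket y z) + bracket y (bracket z x) + bracket z (bracket x y) = 0)
    {Φ : Type*} [AddCommGroup Φ] [Module ℝ Φ] [Module ℂ Φ] [IsScalarTower ℝ ℂ Φ]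
    [UniformSpace Φ] [IsUniformAddGroup Φ] [ContinuousSMul ℂ Φ] [ContinuousSMul ℝ Φ]
    [T2Space Φ] [LocallyConvexSpace ℝ Φ]
    (T : 𝔤 → Φ →L[ℂ] Φ)
    (hTadd : ∀ x y : 𝔤, T (x + y) = T x + T y)
    (hTsmul : ∀ (c : ℝ) (x : 𝔤) (φ : Φ), T (c • x) φ = c • T x φ)
    (hTbrk : ∀ x y : 𝔤, T (bracket x y) = (T x).comp (T y) - (T y).comp (T x))
    (x : 𝔤) (U : ℝ → Φ →L[ℂ] Φ)
    (hU0 : U 0 = ContinuousLinearMap.id ℂ Φ)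
    (hUadd : ∀ s t : ℝ, U (s + t) = (U s).comp (U t))
    (hUequi : ∀ K : Set ℝ, IsCompact K → Equicontinuous (fun k : K => ⇑(U k)))
    (hUderiv : ∀ (φ : Φ) (t : ℝ),
      Tendsto (fun s : ℝ => (s - t)⁻¹ • (U s φ - U t φ)) (nhdsWithin t {t}ᶜ)
        (nhds (T x (U t φ)))) :
    ∀ (y : 𝔤) (t : ℝ) (φ : Φ),
      U t (T y (U (-t) φ)) =
        T ((NormedSpace.exp (t • LinearMap.toContinuousLinearMap (bracket x))) y) φ := by
  classical
  intro y t φ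
  set A : 𝔤 →L[ℝ] 𝔤 := LinearMap.toContinuousLinearMap (bracket x) with hA
  -- `T` as a linear map for each fixed vector
  have Tlin : ∀ ψ : Φ, ∃ f : 𝔤 →ₗ[ℝ] Φ, ∀ z, f z = T z ψ := by
    intro ψ
    refine ⟨{ toFun := fun z => T z ψ,
              map_add' := fun a b => by simp only [hTadd, ContinuousLinearMap.add_apply],
              map_smul' := fun c a => hTsmul c a ψ }, fun z => rfl⟩
  have hT0 : ∀ ψ, T 0 ψ = 0 := by
    intro ψ; obtain ⟨f, hf⟩ := Tlin ψ; rw [← hf, map_zero]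
  have hTneg : ∀ (a : 𝔤) ψ, T (-a) ψ = -(T a ψ) := by
    intro a ψ; obtain ⟨f, hf⟩ := Tlin ψ; rw [← hf, ← hf, map_neg]
  have hTsub : ∀ (a b : 𝔤) ψ, T (a - b) ψ = T a ψ - T b ψ := by
    intro a b ψ; obtain ⟨f, hf⟩ := Tlin ψ; rw [← hf, ← hf, ← hf, map_sub]
  -- joint continuity of (z, ψ) ↦ T z ψ along filters
  have hTcont : ∀ (l : Filter ℝ) (zz : ℝ → 𝔤) (vv : ℝ → Φ) (z₀ : 𝔤) (v₀ : Φ),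
      Tendsto zz l (𝓝 z₀) → Tendsto vv l (𝓝 v₀) →
      Tendsto (fun s => T (zz s) (vv s)) l (𝓝 (T z₀ v₀)) := by
    intro l zz vv z₀ v₀ hz hv
    set b := Module.finBasis ℝ 𝔤 with hb
    have hrepr : ∀ (z : 𝔤) (ψ : Φ), T z ψ = ∑ i, b.repr z i • T (b i) ψ := by
      intro z ψ
      obtain ⟨f, hf⟩ := Tlin ψ
      conv_lhs => rw [← hf, ← b.sum_repr z, map_sum]
      simp_rw [map_smul, hf]
    have hcoord : ∀ i, Continuous fun z : 𝔤 => b.repr z i := by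
      intro i
      exact (b.coord i).continuous_of_finiteDimensional
    rw [hrepr z₀ v₀]
    refine Tendsto.congr (fun s => (hrepr (zz s) (vv s)).symm) ?_
    exact tendsto_finset_sum _ fun i _ =>
      Tendsto.smul (((hcoord i).tendsto z₀).comp hz) (((T (b i)).continuous.tendsto v₀).comp hv)
  -- derivative predicate
  have hDcont : ∀ (g : ℝ → Φ) s₀ L, Dder g s₀ L → Tendsto g (𝓝[≠] s₀) (𝓝 (g s₀)) := by
    intro g s₀ L hg
    rw [← tendsto_sub_nhds_zero_iff]
    have h1 : Tendsto (fun s : ℝ => (s - s₀)) (𝓝[≠] s₀) (𝓝 0) := by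
      simpa using ((continuous_sub_right s₀).tendsto s₀).mono_left nhdsWithin_le_nhds
    have h2 : Tendsto (fun s => (s - s₀) • ((s - s₀)⁻¹ • (g s - g s₀))) (𝓝[≠] s₀)
        (𝓝 ((0:ℝ) • L)) := h1.smul hg
    rw [show ((0:ℝ) • L) = 0 from zero_smul ℝ L] at h2
    refine h2.congr' ?_
    filter_upwards [self_mem_nhdsWithin] with s hs
    have hs' : s - s₀ ≠ 0 := sub_ne_zero.2 hs
    rw [smul_smul, mul_inv_cancel₀ hs', one_smul]
  -- continuity of s ↦ U s v
  have hUcont0 : ∀ (v : Φ) (s₀ : ℝ), Tendsto (fun s => U s v) (𝓝[≠] s₀) (𝓝 (U s₀ v)) :=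
    fun v s₀ => hDcont _ s₀ _ (hUderiv v s₀)
  -- equicontinuity: U s applied to something tending to 0
  have hUzero : ∀ (s₀ : ℝ) (δ : ℝ → Φ), Tendsto δ (𝓝[≠] s₀) (𝓝 0) →
      Tendsto (fun s => U s (δ s)) (𝓝[≠] s₀) (𝓝 0) := by
    intro s₀ δ hδ
    have hE := (hUequi (Set.Icc (s₀ - 1) (s₀ + 1)) isCompact_Icc) 0
    rw [Uniform.tendsto_nhds_right]
    rw [Filter.tendsto_def]
    intro V hV
    have h1 := hE V hV
    have h2 : ∀ᶠ s in 𝓝[≠] s₀, ∀ i : Set.Icc (s₀ - 1) (s₀ + 1), (U i 0, U i (δ s)) ∈ V :=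
      hδ.eventually h1
    have h3 : Set.Icc (s₀ - 1) (s₀ + 1) ∈ 𝓝[≠] s₀ :=
      nhdsWithin_le_nhds (Icc_mem_nhds (by linarith) (by linarith))
    filter_upwards [h2, h3] with s h2s h3s
    have := h2s ⟨s, h3s⟩
    simpa using this
  -- applying U to converging families
  have hUc : ∀ (s₀ : ℝ) (v : ℝ → Φ) (v₀ : Φ), Tendsto v (𝓝[≠] s₀) (𝓝 v₀) →
      Tendsto (fun s => U s (v s)) (𝓝[≠] s₀) (𝓝 (U s₀ v₀)) := by
    intro s₀ v v₀ hv
    have h1 := hUzero s₀ (fun s => v s - v₀) (tendsto_sub_nhds_zero_iff.2 hv)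
    have h2 := hUcont0 v₀ s₀
    have h3 := h1.add h2
    rw [zero_add] at h3
    refine h3.congr fun s => ?_
    simp [map_sub]
  -- product rule for U
  have hDU : ∀ (g : ℝ → Φ) (s₀ : ℝ) (L : Φ), Dder g s₀ L →
      Dder (fun s => U s (g s)) s₀ (U s₀ L + T x (U s₀ (g s₀))) := by
    intro g s₀ L hg
    have h1 : Tendsto (fun s => U s ((s - s₀)⁻¹ • (g s - g s₀))) (𝓝[≠] s₀)
        (𝓝 (U s₀ L)) := hUc s₀ _ _ hg
    have h2 := hUderiv (g s₀) s₀
    have h3 := h1.add h2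
    refine h3.congr fun s => ?_
    rw [ContinuousLinearMap.map_smul_of_tower, map_sub, smul_sub, smul_sub, smul_sub]
    abel
  -- commutation of U with T x
  have hcomm : ∀ (s : ℝ) (ψ : Φ), U s (T x ψ) = T x (U s ψ) := by
    intro s ψ
    have hmap : Tendsto (fun h : ℝ => s + h) (𝓝[≠] (0:ℝ)) (𝓝[≠] s) := by
      rw [tendsto_nhdsWithin_iff]
      constructor
      · simpa using ((continuous_add_left s).tendsto (0:ℝ)).mono_left nhdsWithin_le_nhds
      · filter_upwards [self_mem_nhdsWithin] with h hh
        simpa using hh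
    have lim1 : Tendsto (fun h : ℝ => h⁻¹ • (U (s + h) ψ - U s ψ)) (𝓝[≠] (0:ℝ))
        (𝓝 (T x (U s ψ))) := by
      have := (hUderiv ψ s).comp hmap
      refine this.congr fun h => ?_
      simp [add_sub_cancel_left]
    have lim2 : Tendsto (fun h : ℝ => h⁻¹ • (U (s + h) ψ - U s ψ)) (𝓝[≠] (0:ℝ))
        (𝓝 (U s (T x ψ))) := by
      have inner : Tendsto (fun h : ℝ => h⁻¹ • (U h ψ - ψ)) (𝓝[≠] (0:ℝ)) (𝓝 (T x ψ)) := by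
        have := hUderiv ψ 0
        simp only [hU0, ContinuousLinearMap.id_apply, sub_zero] at this
        exact this
      have := ((U s).continuous.tendsto (T x ψ)).comp inner
      refine this.congr fun h => ?_
      simp only [Function.comp]
      rw [ContinuousLinearMap.map_smul_of_tower, map_sub, hUadd,
        ContinuousLinearMap.comp_apply]
    exact tendsto_nhds_unique lim2 lim1
  -- the path in 𝔤
  set z : ℝ → 𝔤 := fun s => NormedSpace.exp ((t - s) • A) y with hz
  have hzderiv : ∀ s₀ : ℝ, HasDerivAt z (-(A (z s₀))) s₀ := by
    intro s₀
    have h1 : HasDerivAt (fun u : ℝ => NormedSpace.exp (u • A))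
        (A * NormedSpace.exp ((t - s₀) • A)) (t - s₀) := hasDerivAt_exp_smul_const' A (t - s₀)
    have h2 : HasDerivAt (fun s : ℝ => t - s) (-1) s₀ := by
      simpa using (hasDerivAt_id s₀).const_sub t
    have h3 := h1.scomp s₀ h2
    have h4 : HasDerivAt (fun s : ℝ => NormedSpace.exp ((t - s) • A))
        (-(A * NormedSpace.exp ((t - s₀) • A))) s₀ := by
      exact h3.congr_deriv (by simp)
    have h5 := h4.clm_apply (hasDerivAt_const s₀ y)
    convert h5 using 1
    simp [hz, ContinuousLinearMap.mul_apply]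
  have hzt : z t = y := by
    simp [hz, NormedSpace.exp_zero]
  have hz0 : z 0 = NormedSpace.exp (t • A) y := by simp [hz]
  -- slope of z
  have hzslope : ∀ s₀ : ℝ, Tendsto (fun s => (s - s₀)⁻¹ • (z s - z s₀)) (𝓝[≠] s₀)
      (𝓝 (-(A (z s₀)))) := by
    intro s₀
    have := hasDerivAt_iff_tendsto_slope.1 (hzderiv s₀)
    refine this.congr fun s => ?_
    rw [slope_def_module]
  have hzcont : ∀ s₀ : ℝ, Tendsto z (𝓝[≠] s₀) (𝓝 (z s₀)) :=
    fun s₀ => ((hzderiv s₀).continuousAt.tendsto).mono_left nhdsWithin_le_nhds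
  -- the path in Φ
  set w : ℝ → Φ := fun s => U (-s) φ with hw
  have hDw : ∀ s₀ : ℝ, Dder w s₀ (-(T x (w s₀))) := by
    intro s₀
    have hmap : Tendsto (fun s : ℝ => -s) (𝓝[≠] s₀) (𝓝[≠] (-s₀)) := by
      rw [tendsto_nhdsWithin_iff]
      constructor
      · exact (continuous_neg.tendsto s₀).mono_left nhdsWithin_le_nhds
      · filter_upwards [self_mem_nhdsWithin] with s hs
        simpa using hs
    have := ((hUderiv φ (-s₀)).comp hmap).neg
    refine this.congr fun s => ?_
    simp only [Function.comp]
    rw [show (-s - -s₀ : ℝ) = -(s - s₀) by ring, inv_neg, neg_smul, neg_neg]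
  have hwcont : ∀ s₀ : ℝ, Tendsto w (𝓝[≠] s₀) (𝓝 (w s₀)) :=
    fun s₀ => hDcont w s₀ _ (hDw s₀)
  -- derivative of g = T (z s) (w s)
  set g : ℝ → Φ := fun s => T (z s) (w s) with hg
  have hDg : ∀ s₀ : ℝ, Dder g s₀ (-(T (z s₀) (T x (w s₀))) + -(T (bracket x (z s₀)) (w s₀))) := by
    intro s₀
    have h1 : Tendsto (fun s => T (z s) ((s - s₀)⁻¹ • (w s - w s₀))) (𝓝[≠] s₀)
        (𝓝 (T (z s₀) (-(T x (w s₀))))) :=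
      hTcont _ z _ (z s₀) _ (hzcont s₀) (hDw s₀)
    have h2 : Tendsto (fun s => T ((s - s₀)⁻¹ • (z s - z s₀)) (w s₀)) (𝓝[≠] s₀)
        (𝓝 (T (-(A (z s₀))) (w s₀))) :=
      hTcont _ _ (fun _ => w s₀) _ _ (hzslope s₀) tendsto_const_nhds
    have h3 := h1.add h2
    have heq : T (z s₀) (-(T x (w s₀))) + T (-(A (z s₀))) (w s₀)
        = -(T (z s₀) (T x (w s₀))) + -(T (bracket x (z s₀)) (w s₀)) := by
      rw [map_neg, hTneg]
      rfl
    rw [heq] at h3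
    refine h3.congr fun s => ?_
    rw [ContinuousLinearMap.map_smul_of_tower, map_sub, hTsmul, hTsub]
    rw [smul_sub, smul_sub, smul_sub]
    abel
  -- F and its zero derivative
  set F : ℝ → Φ := fun s => U s (g s) with hF
  have hDF : ∀ s₀ : ℝ, Dder F s₀ 0 := by
    intro s₀
    have h1 := hDU g s₀ _ (hDg s₀)
    have hb := congrArg (fun f : Φ →L[ℂ] Φ => f (w s₀)) (hTbrk x (z s₀))
    simp only [ContinuousLinearMap.sub_apply, ContinuousLinearMap.comp_apply] at hb
    have hzero : -(T (z s₀) (T x (w s₀))) + -(T (bracket x (z s₀)) (w s₀)) + T x (g s₀) = 0 := by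
      show -(T (z s₀) (T x (w s₀))) + -(T (bracket x (z s₀)) (w s₀))
          + T x (T (z s₀) (w s₀)) = 0
      rw [hb]
      abel
    have h2 : U s₀ (-(T (z s₀) (T x (w s₀))) + -(T (bracket x (z s₀)) (w s₀)))
        + T x (U s₀ (g s₀)) = 0 := by
      rw [← hcomm s₀ (g s₀), ← map_add, hzero, map_zero]
    rwa [h2] at h1
  -- F is constant via separating dual
  have hsep : SeparatingDual ℝ Φ := inferInstance
  have hconst : F t = F 0 := by
    by_contra hne
    obtain ⟨ℓ, hℓ⟩ := SeparatingDual.exists_separating_of_ne (R := ℝ) hne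
    have hd : ∀ s₀ : ℝ, HasDerivAt (fun s => ℓ (F s)) 0 s₀ := by
      intro s₀
      rw [hasDerivAt_iff_tendsto_slope]
      have hslope : (slope (fun s => ℓ (F s)) s₀) =
          fun s => ℓ ((s - s₀)⁻¹ • (F s - F s₀)) := by
        funext s
        rw [slope_def_module, map_smul, map_sub]
      rw [hslope]
      have := (ℓ.continuous.tendsto (0:Φ)).comp (hDF s₀)
      rw [map_zero] at this
      exact this
    have := is_const_of_deriv_eq_zero (fun s => (hd s).differentiableAt)
      (fun s => (hd s).deriv) t 0
    exact hℓ this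
  -- conclude
  have hFt : F t = U t (T y (U (-t) φ)) := by
    simp only [hF, hg, hw, hzt]
  have hF0 : F 0 = T (NormedSpace.exp (t • A) y) φ := by
    simp only [hF, hg, hw, hz0, hU0, neg_zero, ContinuousLinearMap.id_apply]
  rw [← hFt, hconst, hF0]
end
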